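/- Let D be an edge set with u,v connected in G−D. Suppose v' is v-clean with respect to D and P = π_{G−D}(u,v) passes through v'. Let D* be any edge set such that π(v',v) contains no edge of D* and no vertex of T_v(v') is incident to an edge of D*. If e ∈ D* is an edge with an endpoint x such that π(x,v) contains no edge of D, then P does not traverse e. -/
import Mathlib


open SimpleGraph

variable {V : Type*}

/-- Total weight of a walk with respect to edge weights `w`. -/
def walkWeight (w : Sym2 V → ℝ) {G : SimpleGraph V} {a b : V} (p : G.Walk a b) : ℝ :=
  (p.edges.map w).sum

/-- `p` is the/a minimum-weight path from `a` to `b` in `G`. -/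
def IsShortestPath (w : Sym2 V → ℝ) (G : SimpleGraph V) {a b : V} (p : G.Walk a b) : Prop :=
  p.IsPath ∧ ∀ q : G.Walk a b, q.IsPath → walkWeight w p ≤ walkWeight w q

/-- `Decomposable w G k p` : `p` is the concatenation of at most `k+1` shortest paths
of `G` interleaved with at most `k` single edges. -/
inductive Decomposable (w : Sym2 V → ℝ) (G : SimpleGraph V) :
    ℕ → ∀ {a b : V}, G.Walk a b → Prop
  | single {a b : V} (k : ℕ) (p : G.Walk a b) (hp : IsShortestPath w G p) :
      Decomposable w G k p
  | cons {a b c d : V} (k : ℕ) (p : G.Walk a b) (h : G.Adj b c) (q : G.Walk c d)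
      (hp : IsShortestPath w G p) (hq : Decomposable w G k q) :
      Decomposable w G (k + 1) (p.append (Walk.cons h q))

/-- The rank of a walk `p` in `G`: the least `k` such that `p` is `k`-decomposable. -/
noncomputable def pathRank (w : Sym2 V → ℝ) (G : SimpleGraph V) {a b : V} (p : G.Walk a b) : ℕ :=
  sInf {k | Decomposable w G k p}

lemma walkWeight_append (w : Sym2 V → ℝ) {G : SimpleGraph V} {a b c : V}
    (p : G.Walk a b) (q : G.Walk b c) :
    walkWeight w (p.append q) = walkWeight w p + walkWeight w q := by
  simp [walkWeight, Walk.edges_append]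

lemma walkWeight_transfer (w : Sym2 V → ℝ) {G H : SimpleGraph V} {a b : V} (p : G.Walk a b)
    (h : ∀ e ∈ p.edges, e ∈ H.edgeSet) :
    walkWeight w (p.transfer H h) = walkWeight w p := by
  simp [walkWeight, Walk.edges_transfer]

lemma walkWeight_nonneg {G : SimpleGraph V} {w : Sym2 V → ℝ}
    (hw : ∀ e ∈ G.edgeSet, 0 ≤ w e) {a b : V} (p : G.Walk a b) :
    0 ≤ walkWeight w p := by
  refine List.sum_nonneg ?_
  intro r hr
  obtain ⟨f, hf, rfl⟩ := List.mem_map.mp hr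
  exact hw f (p.edges_subset_edgeSet hf)

lemma exists_path_le [DecidableEq V] {G : SimpleGraph V} {w : Sym2 V → ℝ}
    (hw : ∀ e ∈ G.edgeSet, 0 ≤ w e) {a b : V} (p : G.Walk a b) :
    ∃ q : G.Walk a b, q.IsPath ∧ walkWeight w q ≤ walkWeight w p := by
  induction p with
  | nil => exact ⟨.nil, Walk.IsPath.nil, le_rfl⟩
  | @cons s t b' h p ih =>
    obtain ⟨q, hq, hle⟩ := ih
    have hwe : 0 ≤ w s(s, t) := hw _ h
    by_cases hs : s ∈ q.support
    · refine ⟨q.dropUntil s hs, hq.dropUntil hs, ?_⟩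
      have hsplit : walkWeight w q
          = walkWeight w (q.takeUntil s hs) + walkWeight w (q.dropUntil s hs) := by
        conv_lhs => rw [← Walk.take_spec q hs]
        exact walkWeight_append w _ _
      have := walkWeight_nonneg hw (q.takeUntil s hs)
      have hc : walkWeight w (Walk.cons h p) = w s(s,t) + walkWeight w p := by
        simp [walkWeight]
      linarith
    · refine ⟨Walk.cons h q, hq.cons hs, ?_⟩
      have hc : walkWeight w (Walk.cons h p) = w s(s,t) + walkWeight w p := by
        simp [walkWeight]
      have hc' : walkWeight w (Walk.cons h q) = w s(s,t) + walkWeight w q := by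
        simp [walkWeight]
      linarith

lemma shortest_of_decomp [DecidableEq V] {G : SimpleGraph V} {w : Sym2 V → ℝ}
    (hw : ∀ e ∈ G.edgeSet, 0 ≤ w e) {u x v : V} {P : G.Walk u v}
    (hP : IsShortestPath w G P) (A : G.Walk u x) (S : G.Walk x v) (hS : S.IsPath)
    (hsum : walkWeight w P = walkWeight w A + walkWeight w S) :
    IsShortestPath w G S := by
  refine ⟨hS, fun q hq => ?_⟩
  by_contra hlt
  push_neg at hlt
  obtain ⟨r, hr, hrle⟩ := exists_path_le hw (A.append q)
  have h1 := hP.2 r hr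
  rw [walkWeight_append] at hrle
  linarith

lemma shortest_transfer {G : SimpleGraph V} {D : Set (Sym2 V)} {w : Sym2 V → ℝ}
    {a b : V} {p : G.Walk a b} (hp : IsShortestPath w G p)
    (h : ∀ e ∈ p.edges, e ∈ (G.deleteEdges D).edgeSet) :
    IsShortestPath w (G.deleteEdges D) (p.transfer _ h) := by
  refine ⟨hp.1.transfer h, fun q hq => ?_⟩
  have hq' : ∀ e ∈ q.edges, e ∈ G.edgeSet := by
    intro f hf
    have := q.edges_subset_edgeSet hf
    rw [edgeSet_deleteEdges] at this
    exact this.1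
  have h1 := hp.2 (q.transfer G hq') (hq.transfer hq')
  rw [walkWeight_transfer] at h1 ⊢
  exact h1

theorem stmt9' [Fintype V] [DecidableEq V] (G : SimpleGraph V) (w : Sym2 V → ℝ)
    (hw : ∀ e ∈ G.edgeSet, 0 < w e)
    (πG : ∀ a b : V, G.Walk a b) (hπG : ∀ a b : V, IsShortestPath w G (πG a b))
    (D : Set (Sym2 V))
    (huniqD : ∀ (a b : V) (p q : (G.deleteEdges D).Walk a b),
      IsShortestPath w (G.deleteEdges D) p → IsShortestPath w (G.deleteEdges D) q → p = q)
    (u v : V)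
    (P : (G.deleteEdges D).Walk u v) (hP : IsShortestPath w (G.deleteEdges D) P)
    (v' : V)
    (hv'1 : ∀ e ∈ (πG v' v).edges, e ∉ D)
    (hv'P : v' ∈ P.support)
    (Dstar : Set (Sym2 V))
    (hDs1 : ∀ e ∈ (πG v' v).edges, e ∉ Dstar)
    (hDs2 : ∀ x : V, v' ∈ (πG x v).support → ∀ e ∈ Dstar, x ∉ e)
    (e : Sym2 V) (he : e ∈ Dstar)
    (x : V) (hx : x ∈ e)
    (hxv : ∀ f ∈ (πG x v).edges, f ∉ D) :
    e ∉ P.edges := by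
  intro heP
  have hw0 : ∀ f ∈ (G.deleteEdges D).edgeSet, 0 ≤ w f := by
    intro f hf
    rw [edgeSet_deleteEdges] at hf
    exact (hw f hf.1).le
  set P₁ := P.takeUntil v' hv'P with hP₁
  set P₂ := P.dropUntil v' hv'P with hP₂
  have hspec : P₁.append P₂ = P := Walk.take_spec P hv'P
  have hPsum : walkWeight w P = walkWeight w P₁ + walkWeight w P₂ := by
    conv_lhs => rw [← hspec]
    exact walkWeight_append w _ _
  have hedges : P.edges = P₁.edges ++ P₂.edges := by
    conv_lhs => rw [← hspec]
    exact Walk.edges_append _ _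
  -- transfer of πG v' v
  have htr1 : ∀ f ∈ (πG v' v).edges, f ∈ (G.deleteEdges D).edgeSet := by
    intro f hf
    rw [edgeSet_deleteEdges]
    exact ⟨(πG v' v).edges_subset_edgeSet hf, hv'1 f hf⟩
  have hTr1 : IsShortestPath w (G.deleteEdges D) ((πG v' v).transfer (G.deleteEdges D) htr1) :=
    shortest_transfer (hπG v' v) htr1
  have hP₂short : IsShortestPath w (G.deleteEdges D) P₂ :=
    shortest_of_decomp hw0 hP P₁ P₂ ((hP.1).dropUntil hv'P) hPsum
  have hP₂eq : P₂ = (πG v' v).transfer (G.deleteEdges D) htr1 := huniqD _ _ _ _ hP₂short hTr1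
  rw [hedges, List.mem_append] at heP
  rcases heP with h1 | h2
  · -- e in prefix : derive v' ∈ support of πG x v, contradiction with hDs2
    obtain ⟨y, rfl⟩ := Sym2.mem_iff_exists.mp hx
    have hxs : x ∈ P₁.support := P₁.fst_mem_support_of_mem_edges h1
    set A := P₁.takeUntil x hxs with hA
    set B := P₁.dropUntil x hxs with hB
    have hspec1 : A.append B = P₁ := Walk.take_spec P₁ hxs
    set S := B.append P₂ with hS
    -- S is a path
    have hPsupp : P.support = P₁.support ++ P₂.support.tail := by
      conv_lhs => rw [← hspec]
      exact Walk.support_append _ _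
    have hP1supp : P₁.support = A.support ++ B.support.tail := by
      conv_lhs => rw [← hspec1]
      exact Walk.support_append _ _
    have hsub : List.Sublist S.support P.support := by
      have hBs : List.Sublist B.support (A.support ++ B.support.tail) := by
        have h1 : List.Sublist [x] A.support := List.singleton_sublist.mpr A.end_mem_support
        have h2 := h1.append (List.Sublist.refl B.support.tail)
        conv_lhs => rw [Walk.support_eq_cons B]
        simpa using h2
      have h3 := hBs.append (List.Sublist.refl P₂.support.tail)
      rw [hPsupp, hP1supp, hS, Walk.support_append]
      exact h3
    have hSpath : S.IsPath := by
      rw [Walk.isPath_def]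
      exact hP.1.support_nodup.sublist hsub
    have hSsum : walkWeight w P = walkWeight w A + walkWeight w S := by
      have hP1sum : walkWeight w P₁ = walkWeight w A + walkWeight w B := by
        conv_lhs => rw [← hspec1]
        exact walkWeight_append w _ _
      rw [hPsum, hP1sum, hS, walkWeight_append]
      ring
    have hSshort : IsShortestPath w (G.deleteEdges D) S := shortest_of_decomp hw0 hP A S hSpath hSsum
    have htr2 : ∀ f ∈ (πG x v).edges, f ∈ (G.deleteEdges D).edgeSet := by
      intro f hf
      rw [edgeSet_deleteEdges]
      exact ⟨(πG x v).edges_subset_edgeSet hf, hxv f hf⟩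
    have hTr2 : IsShortestPath w (G.deleteEdges D) ((πG x v).transfer (G.deleteEdges D) htr2) :=
      shortest_transfer (hπG x v) htr2
    have hSeq : S = (πG x v).transfer (G.deleteEdges D) htr2 := huniqD _ _ _ _ hSshort hTr2
    have hv'S : v' ∈ S.support := by
      rw [hS, Walk.mem_support_append_iff]
      exact Or.inr P₂.start_mem_support
    rw [hSeq, Walk.support_transfer] at hv'S
    exact hDs2 x hv'S _ he hx
  · -- e in suffix : edge of πG v' v, contradiction with hDs1
    rw [hP₂eq, Walk.edges_transfer] at h2
    exact hDs1 e h2 he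


/-- Case ii of Case II.  Suppose `v'` is `v`-clean w.r.t. `D` and
`P = π_{G−D}(u,v)` passes through `v'`.  Let `Dstar` be any edge set such that `π(v',v)`
contains no edge of `Dstar` and no vertex of `T_v(v')` is incident to an edge of `Dstar`.
If `e ∈ Dstar` has an endpoint `x` with `π(x,v)` containing no edge of `D`, then `P` does
not traverse `e`. -/
theorem stmt9 [Fintype V] [DecidableEq V] (G : SimpleGraph V) (w : Sym2 V → ℝ)
    (hw : ∀ e ∈ G.edgeSet, 0 < w e)
    (πG : ∀ a b : V, G.Walk a b) (hπG : ∀ a b : V, IsShortestPath w G (πG a b))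
    (huniqG : ∀ (a b : V) (p q : G.Walk a b),
      IsShortestPath w G p → IsShortestPath w G q → p = q)
    (D : Set (Sym2 V)) (hDsub : D ⊆ G.edgeSet)
    (huniqD : ∀ (a b : V) (p q : (G.deleteEdges D).Walk a b),
      IsShortestPath w (G.deleteEdges D) p → IsShortestPath w (G.deleteEdges D) q → p = q)
    (u v : V)
    (P : (G.deleteEdges D).Walk u v) (hP : IsShortestPath w (G.deleteEdges D) P)
    (v' : V)
    -- v' is v-clean w.r.t. D
    (hv'1 : ∀ e ∈ (πG v' v).edges, e ∉ D)
    (hv'2 : ∀ x : V, v' ∈ (πG x v).support → ∀ e ∈ D, x ∉ e)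
    -- P passes through v'
    (hv'P : v' ∈ P.support)
    (Dstar : Set (Sym2 V))
    -- π(v',v) contains no edge of Dstar, and no vertex of T_v(v') is incident to an edge
    -- of Dstar
    (hDs1 : ∀ e ∈ (πG v' v).edges, e ∉ Dstar)
    (hDs2 : ∀ x : V, v' ∈ (πG x v).support → ∀ e ∈ Dstar, x ∉ e)
    (e : Sym2 V) (he : e ∈ Dstar)
    (x : V) (hx : x ∈ e)
    -- π(x,v) contains no edge of D
    (hxv : ∀ f ∈ (πG x v).edges, f ∉ D) :
    e ∉ P.edges :=
  stmt9' G w hw πG hπG D huniqD u v P hP v' hv'1 hv'P Dstar hDs1 hDs2 e he x hx hxv
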